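/- Softmax total-variation Lipschitz bound: for score functions s, s' : V → ℝ on a finite set V, TV(softmax(s), softmax(s')) ≤ (1/2)·(max_v (s(v) − s'(v)) − min_v (s(v) − s'(v))) ≤ max_v |s(v) − s'(v)|. -/
import Mathlib


open Finset Real

set_option maxHeartbeats 1000000

lemma half_abs_sum_eq {V : Type*} [Fintype V] (f : V → ℝ) (hf : ∑ v, f v = 0) :
    (1 / 2 : ℝ) * ∑ v, |f v| = ∑ v, max (f v) 0 ∧
    (1 / 2 : ℝ) * ∑ v, |f v| = ∑ v, max (-f v) 0 := by
  have h1 : ∑ v, |f v| = ∑ v, max (f v) 0 + ∑ v, max (-f v) 0 := by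
    rw [← Finset.sum_add_distrib]
    refine Finset.sum_congr rfl fun v _ => ?_
    rcases le_total (f v) 0 with h | h
    · rw [abs_of_nonpos h, max_eq_right h, max_eq_left (neg_nonneg.mpr h)]; ring
    · rw [abs_of_nonneg h, max_eq_left h, max_eq_right (neg_nonpos.mpr h)]; ring
  have h2 : ∑ v, max (f v) 0 - ∑ v, max (-f v) 0 = 0 := by
    rw [← Finset.sum_sub_distrib]
    have heq : ∀ v ∈ Finset.univ, max (f v) 0 - max (-f v) 0 = f v := by
      intro v _
      rcases le_total (f v) 0 with h | h
      · rw [max_eq_right h, max_eq_left (neg_nonneg.mpr h)]; ring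
      · rw [max_eq_left h, max_eq_right (neg_nonpos.mpr h)]; ring
    rw [Finset.sum_congr rfl heq, hf]
  constructor <;> linarith

/-- Softmax total-variation Lipschitz bound: the TV distance between two
softmax distributions is bounded by half the range of the score difference,
which is itself bounded by the sup-norm of the score difference. -/
theorem softmax_tv_le_score_range
    {V : Type*} [Fintype V] [Nonempty V] (s s' : V → ℝ) :
    let p : V → ℝ := fun v => Real.exp (s v) / ∑ w, Real.exp (s w)
    let q : V → ℝ := fun v => Real.exp (s' v) / ∑ w, Real.exp (s' w)
    ((1 / 2) * ∑ v, |p v - q v| ≤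
      (1 / 2) * (Finset.univ.sup' Finset.univ_nonempty (fun v => s v - s' v) -
        Finset.univ.inf' Finset.univ_nonempty (fun v => s v - s' v))) ∧
    ((1 / 2) * (Finset.univ.sup' Finset.univ_nonempty (fun v => s v - s' v) -
        Finset.univ.inf' Finset.univ_nonempty (fun v => s v - s' v)) ≤
      Finset.univ.sup' Finset.univ_nonempty (fun v => |s v - s' v|)) := by
  intro p q
  set d : V → ℝ := fun v => s v - s' v with hd
  set M : ℝ := Finset.univ.sup' Finset.univ_nonempty d with hM
  set m : ℝ := Finset.univ.inf' Finset.univ_nonempty d with hm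
  obtain ⟨v₀⟩ := ‹Nonempty V›
  have hdM : ∀ v, d v ≤ M := fun v => Finset.le_sup' d (Finset.mem_univ v)
  have hmd : ∀ v, m ≤ d v := fun v => Finset.inf'_le d (Finset.mem_univ v)
  have hmM : m ≤ M := (hmd v₀).trans (hdM v₀)
  constructor
  · -- main TV bound
    have hZ : (0 : ℝ) < ∑ w, Real.exp (s w) :=
      Finset.sum_pos (fun _ _ => Real.exp_pos _) Finset.univ_nonempty
    have hZ' : (0 : ℝ) < ∑ w, Real.exp (s' w) :=
      Finset.sum_pos (fun _ _ => Real.exp_pos _) Finset.univ_nonempty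
    set c : ℝ := (∑ w, Real.exp (s' w)) / (∑ w, Real.exp (s w)) with hc
    have hcpos : 0 < c := div_pos hZ' hZ
    have hppos : ∀ v, 0 < p v := fun v => div_pos (Real.exp_pos _) hZ
    have hqpos : ∀ v, 0 < q v := fun v => div_pos (Real.exp_pos _) hZ'
    have hsum_p : ∑ v, p v = 1 := by
      simp only [p, ← Finset.sum_div]
      exact div_self hZ.ne'
    have hsum_q : ∑ v, q v = 1 := by
      simp only [q, ← Finset.sum_div]
      exact div_self hZ'.ne'
    have hrel : ∀ v, p v = q v * Real.exp (d v) * c := by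
      intro v
      simp only [p, q, hd, hc, Real.exp_sub]
      field_simp
    have hsum0 : ∑ v, (p v - q v) = 0 := by
      rw [Finset.sum_sub_distrib, hsum_p, hsum_q, sub_self]
    obtain ⟨htv1, htv2⟩ := half_abs_sum_eq (fun v => p v - q v) hsum0
    set E : ℝ := Real.exp (-((M - m) / 2)) with hE
    have hEpos : 0 < E := Real.exp_pos _
    have hE1 : E ≤ 1 := Real.exp_le_one_iff.mpr (by linarith)
    have hkey : 1 - E ≤ (1 / 2) * (M - m) := by
      have := Real.add_one_le_exp (-((M - m) / 2))
      linarith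
    have hEE : E * E = Real.exp (m - M) := by
      rw [hE, ← Real.exp_add]; ring_nf
    rcases le_total E (Real.exp m * c) with hcase | hcase
    · -- use q-side bound: TV ≤ 1 - exp m * c ≤ 1 - E
      rw [htv2]
      have hbound : ∀ v, max (-(p v - q v)) 0 ≤ q v * (1 - E) := by
        intro v
        have h1 : q v * Real.exp m * c ≤ p v := by
          rw [hrel v]
          exact mul_le_mul_of_nonneg_right
            (mul_le_mul_of_nonneg_left (Real.exp_le_exp.mpr (hmd v)) (hqpos v).le) hcpos.le
        have h2 : q v * E ≤ q v * (Real.exp m * c) :=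
          mul_le_mul_of_nonneg_left hcase (hqpos v).le
        have h3 : -(p v - q v) ≤ q v * (1 - E) := by nlinarith
        have h4 : (0:ℝ) ≤ q v * (1 - E) := by
          have : (0:ℝ) ≤ 1 - E := by linarith
          positivity
        exact max_le h3 h4
      calc ∑ v, max (-(p v - q v)) 0 ≤ ∑ v, q v * (1 - E) :=
              Finset.sum_le_sum fun v _ => hbound v
        _ = 1 - E := by rw [← Finset.sum_mul, hsum_q, one_mul]
        _ ≤ (1 / 2) * (M - m) := hkey
    · -- use p-side bound
      rw [htv1]
      have hXE : E * (Real.exp M * c) ≤ 1 := by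
        have h0 : E * Real.exp M * (Real.exp m * c) ≤ E * Real.exp M * E :=
          mul_le_mul_of_nonneg_left hcase (by positivity)
        have h1' : E * Real.exp M * E = Real.exp m := by
          rw [show E * Real.exp M * E = (E * E) * Real.exp M by ring, hEE,
            ← Real.exp_add]
          ring_nf
        nlinarith [h0, h1', Real.exp_pos m]
      have hbound : ∀ v, max (p v - q v) 0 ≤ p v * (1 - E) := by
        intro v
        have hx : p v ≤ q v * Real.exp M * c := by
          rw [hrel v]
          exact mul_le_mul_of_nonneg_right
            (mul_le_mul_of_nonneg_left (Real.exp_le_exp.mpr (hdM v)) (hqpos v).le) hcpos.le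
        have hqE : p v * E ≤ q v := by
          nlinarith [mul_le_mul_of_nonneg_right hx hEpos.le,
            mul_le_mul_of_nonneg_left hXE (hqpos v).le]
        have h3 : p v - q v ≤ p v * (1 - E) := by nlinarith
        have h4 : (0:ℝ) ≤ p v * (1 - E) := by
          have : (0:ℝ) ≤ 1 - E := by linarith
          positivity
        exact max_le h3 h4
      calc ∑ v, max (p v - q v) 0 ≤ ∑ v, p v * (1 - E) :=
              Finset.sum_le_sum fun v _ => hbound v
        _ = 1 - E := by rw [← Finset.sum_mul, hsum_p, one_mul]
        _ ≤ (1 / 2) * (M - m) := hkey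
  · -- range ≤ 2 * sup of abs
    set A : ℝ := Finset.univ.sup' Finset.univ_nonempty (fun v => |s v - s' v|) with hA
    have hMA : M ≤ A := by
      apply Finset.sup'_le
      intro v _
      have h1 : |s v - s' v| ≤ A := by
        rw [hA]; exact Finset.le_sup' (fun v => |s v - s' v|) (Finset.mem_univ v)
      exact (le_abs_self (s v - s' v)).trans h1
    have hmA : -A ≤ m := by
      apply Finset.le_inf'
      intro v _
      have h1 : |s v - s' v| ≤ A := by
        rw [hA]; exact Finset.le_sup' (fun v => |s v - s' v|) (Finset.mem_univ v)
      have h2 : -|s v - s' v| ≤ d v := neg_abs_le (s v - s' v)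
      linarith
    linarith
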